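/- Let g ≥ 1, d ≥ 1, and e ≥ 1 be integers. Let C be the free abelian group with basis {P_k, p_k, Q_{i,k}, q_{i,k}, R_k, r_k : 1 ≤ i ≤ 2g, k ≥ 0}. Define ∂ : C → C by: ∂(P_0) = d·e·r_0; ∂(P_k) = d·e·r_k + d·p_{k-1} for k ≥ 1; ∂(Q_{i,k}) = d·q_{i,k-1} for k ≥ 1 and ∂(Q_{i,0}) = 0; ∂(R_k) = d·r_{k-1} for k ≥ 1 and ∂(R_0) = 0; and ∂ = 0 on all generators p_k, q_{i,k}, r_k. Then ∂² = 0, and the homology ker(∂)/im(∂) is isomorphic to ℤ^{2g+2} ⊕ ⊕_{k≥0} (ℤ/dℤ)^{2g+2}, where the free part is generated by the classes of P_0 - e·R_1, Q_{1,0}, ..., Q_{2g,0}, R_0, and the torsion part by the classes of p_k, q_{i,k}, r_k. -/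

import Mathlib

/-- The free abelian group on generators `P_k, p_k, Q_{i,k}, q_{i,k}, R_k, r_k`
(`1 ≤ i ≤ 2g`, `k ≥ 0`), as the six factors below (in that order). -/
abbrev C10 (g : ℕ) : Type :=
  ((ℕ →₀ ℤ) × (ℕ →₀ ℤ)) ×
  (((Fin (2 * g) × ℕ) →₀ ℤ) × ((Fin (2 * g) × ℕ) →₀ ℤ)) ×
  ((ℕ →₀ ℤ) × (ℕ →₀ ℤ))

noncomputable def Pg (g k : ℕ) : C10 g := ((Finsupp.single k 1, 0), (0, 0), (0, 0))
noncomputable def pg (g k : ℕ) : C10 g := ((0, Finsupp.single k 1), (0, 0), (0, 0))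
noncomputable def Qg (g : ℕ) (i : Fin (2 * g)) (k : ℕ) : C10 g :=
  ((0, 0), (Finsupp.single (i, k) 1, 0), (0, 0))
noncomputable def qg (g : ℕ) (i : Fin (2 * g)) (k : ℕ) : C10 g :=
  ((0, 0), (0, Finsupp.single (i, k) 1), (0, 0))
noncomputable def Rg (g k : ℕ) : C10 g := ((0, 0), (0, 0), (Finsupp.single k 1, 0))
noncomputable def rg (g k : ℕ) : C10 g := ((0, 0), (0, 0), (0, Finsupp.single k 1))

/-- Homology of an endomorphism viewed as a differential: `ker f / im f`. -/
abbrev lhomology {R M : Type*} [CommRing R] [AddCommGroup M] [Module R M]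
    (f : M →ₗ[R] M) :=
  LinearMap.ker f ⧸ (LinearMap.range f).comap (LinearMap.ker f).subtype

/-! The differential is `d • ∂'`, where `∂'` lowers the `U`-degree:
`∂' P_k = e r_k + p_{k-1}`, `∂' Q_{i,k} = q_{i,k-1}`, `∂' R_k = r_{k-1}`, and `∂'` kills the
lowercase generators. Since `∂'` maps onto the lowercase span, on which it vanishes, `∂² = 0`
and the boundaries are `d` times the lowercase span. A cycle is a lowercase chain plus an
integer combination of `P_0 - e R_1`, `Q_{i,0}` and `R_0`, so its class is determined by its
coefficients of `P_0, Q_{i,0}, R_0` together with its lowercase coefficients mod `d`. -/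

open Finsupp

section Homology

variable {R M N : Type*} [CommRing R] [AddCommGroup M] [Module R M] [AddCommGroup N] [Module R N]

noncomputable def lhomologyEquivOfSurjective (D : M →ₗ[R] M) (f : M →ₗ[R] N)
    (hsurj : ∀ n, ∃ x ∈ LinearMap.ker D, f x = n)
    (hker : ∀ x ∈ LinearMap.ker D, f x = 0 ↔ x ∈ LinearMap.range D) :
    lhomology D ≃ₗ[R] N :=
  Submodule.quotEquivOfEq _ _ (by ext ⟨x, hx⟩; simp [hker x hx]) ≪≫ₗ
    (f ∘ₗ (LinearMap.ker D).subtype).quotKerEquivOfSurjective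
      (fun n => by obtain ⟨x, hx, rfl⟩ := hsurj n; exact ⟨⟨x, hx⟩, rfl⟩)

@[simp] lemma lhomologyEquivOfSurjective_mk (D : M →ₗ[R] M) (f : M →ₗ[R] N) hsurj hker
    (x : M) (hx : x ∈ LinearMap.ker D) :
    lhomologyEquivOfSurjective D f hsurj hker (Submodule.Quotient.mk ⟨x, hx⟩) = f x :=
  rfl

end Homology

lemma Finsupp.exists_smul_eq_of_forall_dvd {α : Type*} {n : ℤ} (f : α →₀ ℤ) (h : ∀ a, n ∣ f a) :
    ∃ f' : α →₀ ℤ, n • f' = f :=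
  ⟨f.mapRange (· / n) (Int.zero_ediv n), by ext a; simp [Int.mul_ediv_cancel' (h a)]⟩

namespace C10

noncomputable def shift : (ℕ →₀ ℤ) →ₗ[ℤ] ℕ →₀ ℤ := lcomapDomain Nat.succ Nat.succ_injective

noncomputable def shiftQ (g : ℕ) : (Fin (2 * g) × ℕ →₀ ℤ) →ₗ[ℤ] Fin (2 * g) × ℕ →₀ ℤ :=
  lcomapDomain (Prod.map id Nat.succ) (Function.injective_id.prodMap Nat.succ_injective)

@[simp] lemma shift_apply (f : ℕ →₀ ℤ) (k : ℕ) : shift f k = f (k + 1) := rfl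

@[simp] lemma shiftQ_apply {g : ℕ} (f : Fin (2 * g) × ℕ →₀ ℤ) (ik : Fin (2 * g) × ℕ) :
    shiftQ g f ik = f (ik.1, ik.2 + 1) := rfl

lemma shift_surjective : Function.Surjective shift :=
  comapDomain_surjective Nat.succ_injective

lemma shiftQ_surjective (g : ℕ) : Function.Surjective (shiftQ g) :=
  comapDomain_surjective (Function.injective_id.prodMap Nat.succ_injective)

lemma eq_zero_of_shift_eq_zero {f : ℕ →₀ ℤ} (h : shift f = 0) (h0 : f 0 = 0) : f = 0 := by
  ext (_ | k)
  · exact h0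
  · exact DFunLike.congr_fun h k

lemma eq_zero_of_shiftQ_eq_zero {g : ℕ} {f : Fin (2 * g) × ℕ →₀ ℤ} (h : shiftQ g f = 0)
    (h0 : ∀ i, f (i, 0) = 0) : f = 0 := by
  ext ⟨i, _ | k⟩
  · exact h0 i
  · exact DFunLike.congr_fun h (i, k)

variable {g : ℕ}

noncomputable def reducedDiff (g : ℕ) (e : ℤ) : C10 g →ₗ[ℤ] C10 g where
  toFun x := ((0, shift x.1.1), (0, shiftQ g x.2.1.1), (0, e • x.1.1 + shift x.2.2.1))
  map_add' x y := by
    simp only [Prod.fst_add, Prod.snd_add, map_add, smul_add, Prod.mk_add_mk, add_zero,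
      add_add_add_comm]
  map_smul' c x := by
    simp only [Prod.smul_fst, Prod.smul_snd, map_smul, smul_add, Prod.smul_mk, smul_zero,
      RingHom.id_apply, smul_comm c e]

@[simp] lemma reducedDiff_apply (e : ℤ) (x : C10 g) :
    reducedDiff g e x = ((0, shift x.1.1), (0, shiftQ g x.2.1.1), (0, e • x.1.1 + shift x.2.2.1)) :=
  rfl

lemma reducedDiff_comp_self (e : ℤ) : reducedDiff g e ∘ₗ reducedDiff g e = 0 := by
  ext x <;> simp

lemma linearMap_ext {M : Type*} [AddCommGroup M] {f f' : C10 g →ₗ[ℤ] M}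
    (hP : ∀ k, f (Pg g k) = f' (Pg g k)) (hp : ∀ k, f (pg g k) = f' (pg g k))
    (hQ : ∀ i k, f (Qg g i k) = f' (Qg g i k)) (hq : ∀ i k, f (qg g i k) = f' (qg g i k))
    (hR : ∀ k, f (Rg g k) = f' (Rg g k)) (hr : ∀ k, f (rg g k) = f' (rg g k)) : f = f' := by
  refine LinearMap.prod_ext (LinearMap.prod_ext ?_ ?_) (LinearMap.prod_ext
    (LinearMap.prod_ext ?_ ?_) (LinearMap.prod_ext ?_ ?_)) <;>
    refine Finsupp.lhom_ext' fun k => LinearMap.ext_ring ?_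
  exacts [hP k, hp k, hQ k.1 k.2, hq k.1 k.2, hR k, hr k]

lemma eq_smul_reducedDiff {d e : ℤ} (D : C10 g →ₗ[ℤ] C10 g)
    (hP0 : D (Pg g 0) = (d * e) • rg g 0)
    (hP : ∀ k : ℕ, D (Pg g (k + 1)) = (d * e) • rg g (k + 1) + d • pg g k)
    (hQ0 : ∀ i, D (Qg g i 0) = 0)
    (hQ : ∀ i (k : ℕ), D (Qg g i (k + 1)) = d • qg g i k)
    (hR0 : D (Rg g 0) = 0)
    (hR : ∀ k : ℕ, D (Rg g (k + 1)) = d • rg g k)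
    (hp : ∀ k : ℕ, D (pg g k) = 0)
    (hq : ∀ i (k : ℕ), D (qg g i k) = 0)
    (hr : ∀ k : ℕ, D (rg g k) = 0) :
    D = d • reducedDiff g e := by
  refine linearMap_ext ?_ (fun k => ?_) (fun i k => ?_) (fun i k => ?_) (fun k => ?_) (fun k => ?_)
  · rintro (_ | k)
    · rw [hP0]; ext <;> simp [Pg, rg, single_apply]
    · rw [hP]; ext <;> simp [Pg, pg, rg, single_apply]
  · rw [hp]; ext <;> simp [pg]
  · cases k
    · rw [hQ0]; ext <;> simp [Qg]
    · rw [hQ]; ext <;> simp [Qg, qg, single_apply, Prod.ext_iff]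
  · rw [hq]; ext <;> simp [qg]
  · cases k
    · rw [hR0]; ext <;> simp [Rg]
    · rw [hR]; ext <;> simp [Rg, rg, single_apply]
  · rw [hr]; ext <;> simp [rg]

noncomputable def freeCoord (g : ℕ) : C10 g →+ ℤ × (Fin (2 * g) → ℤ) × ℤ where
  toFun x := (x.1.1 0, fun i => x.2.1.1 (i, 0), x.2.2.1 0)
  map_zero' := rfl
  map_add' _ _ := rfl

@[simp] lemma freeCoord_apply (x : C10 g) :
    freeCoord g x = (x.1.1 0, fun i => x.2.1.1 (i, 0), x.2.2.1 0) := rfl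

noncomputable def torsionCoord (g d : ℕ) :
    C10 g →+ ℕ →₀ ZMod d × (Fin (2 * g) → ZMod d) × ZMod d where
  toFun x := onFinset (x.1.2.support ∪ x.2.1.2.support.image Prod.snd ∪ x.2.2.2.support)
    (fun k => (x.1.2 k, fun i => x.2.1.2 (i, k), x.2.2.2 k)) (by
      intro k hk
      contrapose! hk
      simp_all [Finset.mem_union, Finset.mem_image, Pi.zero_def])
  map_zero' := by ext <;> simp
  map_add' x y := by ext <;> simp

@[simp] lemma torsionCoord_apply (d : ℕ) (x : C10 g) (k : ℕ) :
    torsionCoord g d x k =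
      ((x.1.2 k : ZMod d), fun i => (x.2.1.2 (i, k) : ZMod d), (x.2.2.2 k : ZMod d)) :=
  rfl

lemma exists_reducedDiff_eq (e : ℤ) (b r : ℕ →₀ ℤ) (c : Fin (2 * g) × ℕ →₀ ℤ) :
    ∃ z, reducedDiff g e z = ((0, b), (0, c), (0, r)) := by
  obtain ⟨P, rfl⟩ := shift_surjective b
  obtain ⟨Q, rfl⟩ := shiftQ_surjective g c
  obtain ⟨R, hR⟩ := shift_surjective (r - e • P)
  exact ⟨((P, 0), (Q, 0), (R, 0)), by simp [hR]⟩

lemma freeCoord_reducedDiff (e : ℤ) (x : C10 g) : freeCoord g (reducedDiff g e x) = 0 := rfl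

lemma torsionCoord_eq_zero_iff (d : ℕ) (x : C10 g) :
    torsionCoord g d x = 0 ↔ (∀ k, (d : ℤ) ∣ x.1.2 k) ∧ (∀ ik, (d : ℤ) ∣ x.2.1.2 ik) ∧
      ∀ k, (d : ℤ) ∣ x.2.2.2 k := by
  simp only [Finsupp.ext_iff, torsionCoord_apply, Finsupp.coe_zero, Pi.zero_apply, Prod.ext_iff,
    Prod.fst_zero, Prod.snd_zero, funext_iff, ZMod.intCast_zmod_eq_zero_iff_dvd, Prod.forall]
  grind

lemma torsionCoord_natCast_zsmul (d : ℕ) (x : C10 g) : torsionCoord g d ((d : ℤ) • x) = 0 :=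
  (torsionCoord_eq_zero_iff d _).2 ⟨fun _ => by simp, fun _ => by simp, fun _ => by simp⟩

lemma exists_torsionCoord_eq (d : ℕ) (F : ℕ →₀ ZMod d × (Fin (2 * g) → ZMod d) × ZMod d) :
    ∃ b r : ℕ →₀ ℤ, ∃ c : Fin (2 * g) × ℕ →₀ ℤ, torsionCoord g d ((0, b), (0, c), (0, r)) = F := by
  let lift : ZMod d → ℤ := fun t => t.cast
  have hlift : lift 0 = 0 := ZMod.cast_zero
  refine ⟨F.mapRange (fun t => lift t.1) hlift, F.mapRange (fun t => lift t.2.2) hlift,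
    Finsupp.uncurry (equivFunOnFinite.symm fun i => F.mapRange (fun t => lift (t.2.1 i)) hlift),
    ?_⟩
  ext k <;> simp [lift, Finsupp.uncurry_apply]

lemma eq_lowercase_of_reducedDiff_eq_zero {e : ℤ} {x : C10 g} (hx : reducedDiff g e x = 0)
    (h : freeCoord g x = 0) : x = ((0, x.1.2), (0, x.2.1.2), (0, x.2.2.2)) := by
  obtain ⟨⟨P, p⟩, ⟨Q, q⟩, ⟨R, r⟩⟩ := x
  simp only [reducedDiff_apply, Prod.ext_iff, Prod.fst_zero, Prod.snd_zero, true_and] at hx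
  obtain ⟨hP, hQ, hR⟩ := hx
  simp only [freeCoord_apply, Prod.ext_iff, Prod.fst_zero, Prod.snd_zero, funext_iff,
    Pi.zero_apply] at h
  obtain ⟨hP0, hQ0, hR0⟩ := h
  obtain rfl : P = 0 := eq_zero_of_shift_eq_zero hP hP0
  obtain rfl : Q = 0 := eq_zero_of_shiftQ_eq_zero hQ hQ0
  obtain rfl : R = 0 := eq_zero_of_shift_eq_zero (by simpa using hR) hR0
  rfl

noncomputable def coord (g d : ℕ) :
    C10 g →ₗ[ℤ] (ℤ × (Fin (2 * g) → ℤ) × ℤ) × (ℕ →₀ ZMod d × (Fin (2 * g) → ZMod d) × ZMod d) :=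
  ((freeCoord g).prod (torsionCoord g d)).toIntLinearMap

lemma coord_apply (d : ℕ) (x : C10 g) : coord g d x = (freeCoord g x, torsionCoord g d x) := rfl

lemma coord_eq_zero_iff {d : ℕ} {e : ℤ} {x : C10 g} (hx : reducedDiff g e x = 0) :
    coord g d x = 0 ↔ x ∈ LinearMap.range ((d : ℤ) • reducedDiff g e) := by
  constructor
  · intro h
    rw [coord_apply, Prod.mk_eq_zero] at h
    obtain ⟨hb, hc, hr⟩ := (torsionCoord_eq_zero_iff d x).1 h.2
    obtain ⟨b, hb⟩ := x.1.2.exists_smul_eq_of_forall_dvd hb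
    obtain ⟨c, hc⟩ := x.2.1.2.exists_smul_eq_of_forall_dvd hc
    obtain ⟨r, hr⟩ := x.2.2.2.exists_smul_eq_of_forall_dvd hr
    obtain ⟨z, hz⟩ := exists_reducedDiff_eq e b r c
    refine ⟨z, ?_⟩
    rw [eq_lowercase_of_reducedDiff_eq_zero hx h.1, LinearMap.smul_apply, hz, ← hb, ← hc, ← hr]
    simp
  · rintro ⟨z, rfl⟩
    rw [coord_apply, LinearMap.smul_apply, torsionCoord_natCast_zsmul, map_zsmul,
      freeCoord_reducedDiff, smul_zero]
    rfl

lemma exists_coord_eq (d : ℕ) (e : ℤ)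
    (t : (ℤ × (Fin (2 * g) → ℤ) × ℤ) × (ℕ →₀ ZMod d × (Fin (2 * g) → ZMod d) × ZMod d)) :
    ∃ x, reducedDiff g e x = 0 ∧ coord g d x = t := by
  obtain ⟨⟨m, v, n⟩, F⟩ := t
  obtain ⟨b, r, c, hF⟩ := exists_torsionCoord_eq d F
  let Q : Fin (2 * g) × ℕ →₀ ℤ := Finsupp.uncurry (equivFunOnFinite.symm fun i => single 0 (v i))
  refine ⟨((single 0 m, b), (Q, c), (single 0 n - single 1 (e * m), r)), ?_, ?_⟩
  · have hP : shift (single 0 m) = 0 := by ext; simp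
    have hQ : shiftQ g Q = 0 := by ext ⟨i, k⟩; simp [Q]
    have hR : e • single 0 m + shift (single 0 n - single 1 (e * m)) = 0 := by
      ext (_ | k) <;> simp
    rw [reducedDiff_apply, hP, hQ, hR]
    rfl
  · rw [coord_apply, ← hF]
    ext1
    · ext <;> simp [Q]
    · rfl

section Generators

variable (d : ℕ)

@[simp] lemma coord_Pg_zero : coord g d (Pg g 0) = ((1, 0, 0), 0) := by
  ext <;> simp [coord_apply, Pg]

@[simp] lemma coord_Qg_zero (i : Fin (2 * g)) :
    coord g d (Qg g i 0) = ((0, Pi.single i 1, 0), 0) := by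
  ext <;> simp [coord_apply, Qg, Pi.single_apply, single_apply, eq_comm]

@[simp] lemma coord_Rg_zero : coord g d (Rg g 0) = ((0, 0, 1), 0) := by
  ext <;> simp [coord_apply, Rg]

@[simp] lemma coord_Rg_succ (k : ℕ) : coord g d (Rg g (k + 1)) = 0 := by
  ext <;> simp [coord_apply, Rg]

@[simp] lemma coord_pg (k : ℕ) : coord g d (pg g k) = (0, single k (1, 0, 0)) := by
  refine Prod.ext (by ext <;> simp [coord_apply, pg]) (Finsupp.ext fun k' => ?_)
  by_cases h : k = k' <;> ext <;> simp [coord_apply, pg, h]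

@[simp] lemma coord_qg (i : Fin (2 * g)) (k : ℕ) :
    coord g d (qg g i k) = (0, single k (0, Pi.single i 1, 0)) := by
  refine Prod.ext (by ext <;> simp [coord_apply, qg]) (Finsupp.ext fun k' => ?_)
  by_cases h : k = k' <;> ext <;> simp [coord_apply, qg, h, Pi.single_apply, single_apply, eq_comm]

@[simp] lemma coord_rg (k : ℕ) : coord g d (rg g k) = (0, single k (0, 0, 1)) := by
  refine Prod.ext (by ext <;> simp [coord_apply, rg]) (Finsupp.ext fun k' => ?_)
  by_cases h : k = k' <;> ext <;> simp [coord_apply, rg, h]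

end Generators

end C10

theorem stmt10_general (g d e : ℕ) (hd : 1 ≤ d)
    (D : C10 g →ₗ[ℤ] C10 g)
    (hP0 : D (Pg g 0) = ((d : ℤ) * e) • rg g 0)
    (hP : ∀ k : ℕ, D (Pg g (k + 1)) = ((d : ℤ) * e) • rg g (k + 1) + (d : ℤ) • pg g k)
    (hQ0 : ∀ i, D (Qg g i 0) = 0)
    (hQ : ∀ i (k : ℕ), D (Qg g i (k + 1)) = (d : ℤ) • qg g i k)
    (hR0 : D (Rg g 0) = 0)
    (hR : ∀ k : ℕ, D (Rg g (k + 1)) = (d : ℤ) • rg g k)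
    (hp : ∀ k : ℕ, D (pg g k) = 0)
    (hq : ∀ i (k : ℕ), D (qg g i k) = 0)
    (hr : ∀ k : ℕ, D (rg g k) = 0) :
    D ∘ₗ D = 0 ∧
    ∃ φ : lhomology D ≃+
        (ℤ × (Fin (2 * g) → ℤ) × ℤ) ×
        (ℕ →₀ (ZMod d × (Fin (2 * g) → ZMod d) × ZMod d)),
      (∀ hmem : Pg g 0 - (e : ℤ) • Rg g 1 ∈ LinearMap.ker D,
        φ (Submodule.Quotient.mk ⟨Pg g 0 - (e : ℤ) • Rg g 1, hmem⟩) = ((1, 0, 0), 0)) ∧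
      (∀ i, ∀ hmem : Qg g i 0 ∈ LinearMap.ker D,
        φ (Submodule.Quotient.mk ⟨Qg g i 0, hmem⟩) = ((0, Pi.single i 1, 0), 0)) ∧
      (∀ hmem : Rg g 0 ∈ LinearMap.ker D,
        φ (Submodule.Quotient.mk ⟨Rg g 0, hmem⟩) = ((0, 0, 1), 0)) ∧
      (∀ k, ∀ hmem : pg g k ∈ LinearMap.ker D,
        φ (Submodule.Quotient.mk ⟨pg g k, hmem⟩) = (0, Finsupp.single k (1, 0, 0))) ∧
      (∀ i k, ∀ hmem : qg g i k ∈ LinearMap.ker D,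
        φ (Submodule.Quotient.mk ⟨qg g i k, hmem⟩) =
          (0, Finsupp.single k (0, Pi.single i 1, 0))) ∧
      (∀ k, ∀ hmem : rg g k ∈ LinearMap.ker D,
        φ (Submodule.Quotient.mk ⟨rg g k, hmem⟩) = (0, Finsupp.single k (0, 0, 1))) := by
  obtain rfl := C10.eq_smul_reducedDiff D hP0 hP hQ0 hQ hR0 hR hp hq hr
  have hd0 : (d : ℤ) ≠ 0 := by omega
  have hker (x : C10 g) : x ∈ LinearMap.ker ((d : ℤ) • C10.reducedDiff g e) ↔
      C10.reducedDiff g e x = 0 := by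
    rw [LinearMap.mem_ker, LinearMap.smul_apply, smul_eq_zero, or_iff_right hd0]
  let φ := lhomologyEquivOfSurjective _ (C10.coord g d)
    (fun t => by
      obtain ⟨x, hx, rfl⟩ := C10.exists_coord_eq d e t
      exact ⟨x, (hker x).2 hx, rfl⟩)
    (fun x hx => C10.coord_eq_zero_iff ((hker x).1 hx))
  refine ⟨?_, φ.toAddEquiv, ?_, ?_, ?_, ?_, ?_, ?_⟩
  · rw [LinearMap.smul_comp, LinearMap.comp_smul, C10.reducedDiff_comp_self, smul_zero, smul_zero]
  all_goals intros; simp [φ]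

/-- The `S¹`-equivariant contact homology of a prequantization bundle of Euler class
`e > 0` over a genus `g ≥ 1` surface, in the class of `d ≥ 1` times the fiber:
with `∂ P_0 = de·r_0`, `∂ P_k = de·r_k + d·p_{k-1}` (`k ≥ 1`),
`∂ Q_{i,k} = d·q_{i,k-1}` (`k ≥ 1`), `∂ Q_{i,0} = 0`, `∂ R_k = d·r_{k-1}` (`k ≥ 1`),
`∂ R_0 = 0`, and `∂ = 0` on `p_k, q_{i,k}, r_k`, we have `∂² = 0` and homology
`ℤ^{2g+2} ⊕ ⊕_{k≥0} (ℤ/d)^{2g+2}`, with free part generated by the classes of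
`P_0 - e·R_1`, the `Q_{i,0}`, and `R_0`, and torsion part generated by the classes of
the `p_k`, `q_{i,k}`, `r_k`. -/
theorem stmt10 (g d e : ℕ) (hg : 1 ≤ g) (hd : 1 ≤ d) (he : 1 ≤ e)
    (D : C10 g →ₗ[ℤ] C10 g)
    (hP0 : D (Pg g 0) = ((d : ℤ) * e) • rg g 0)
    (hP : ∀ k : ℕ, D (Pg g (k + 1)) = ((d : ℤ) * e) • rg g (k + 1) + (d : ℤ) • pg g k)
    (hQ0 : ∀ i, D (Qg g i 0) = 0)
    (hQ : ∀ i (k : ℕ), D (Qg g i (k + 1)) = (d : ℤ) • qg g i k)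
    (hR0 : D (Rg g 0) = 0)
    (hR : ∀ k : ℕ, D (Rg g (k + 1)) = (d : ℤ) • rg g k)
    (hp : ∀ k : ℕ, D (pg g k) = 0)
    (hq : ∀ i (k : ℕ), D (qg g i k) = 0)
    (hr : ∀ k : ℕ, D (rg g k) = 0) :
    D ∘ₗ D = 0 ∧
    ∃ φ : lhomology D ≃+
        (ℤ × (Fin (2 * g) → ℤ) × ℤ) ×
        (ℕ →₀ (ZMod d × (Fin (2 * g) → ZMod d) × ZMod d)),
      (∀ hmem : Pg g 0 - (e : ℤ) • Rg g 1 ∈ LinearMap.ker D,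
        φ (Submodule.Quotient.mk ⟨Pg g 0 - (e : ℤ) • Rg g 1, hmem⟩) = ((1, 0, 0), 0)) ∧
      (∀ i, ∀ hmem : Qg g i 0 ∈ LinearMap.ker D,
        φ (Submodule.Quotient.mk ⟨Qg g i 0, hmem⟩) = ((0, Pi.single i 1, 0), 0)) ∧
      (∀ hmem : Rg g 0 ∈ LinearMap.ker D,
        φ (Submodule.Quotient.mk ⟨Rg g 0, hmem⟩) = ((0, 0, 1), 0)) ∧
      (∀ k, ∀ hmem : pg g k ∈ LinearMap.ker D,
        φ (Submodule.Quotient.mk ⟨pg g k, hmem⟩) = (0, Finsupp.single k (1, 0, 0))) ∧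
      (∀ i k, ∀ hmem : qg g i k ∈ LinearMap.ker D,
        φ (Submodule.Quotient.mk ⟨qg g i k, hmem⟩) =
          (0, Finsupp.single k (0, Pi.single i 1, 0))) ∧
      (∀ k, ∀ hmem : rg g k ∈ LinearMap.ker D,
        φ (Submodule.Quotient.mk ⟨rg g k, hmem⟩) = (0, Finsupp.single k (0, 0, 1))) :=
  stmt10_general g d e hd D hP0 hP hQ0 hQ hR0 hR hp hq hr
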